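/- For every natural number m ≥ 1 and every real x with 0 < x < 1, one has Q_m(x) < Q_{m+1}(x) < sin(πx). -/

import Mathlib

open Real

/-- The summand `a_{j,k} = (-π²/4)^k / (2j+2k)! · C(j+k, j)`. -/
noncomputable def a (j k : ℕ) : ℝ :=
  (-(π ^ 2) / 4) ^ k / (Nat.factorial (2 * j + 2 * k)) * (Nat.choose (j + k) j)

/-- `t_j = Σ_{k=0}^∞ a_{j,k}`. -/
noncomputable def t (j : ℕ) : ℝ := ∑' k : ℕ, a j k

/-- `Q_m(x) = Σ_{j=1}^m t_j π^{2j} (x(1 − x))^j`. -/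
noncomputable def Q (m : ℕ) (x : ℝ) : ℝ :=
  ∑ j ∈ Finset.Icc 1 m, t j * π ^ (2 * j) * (x * (1 - x)) ^ j

/-! Since `π²/4 - (πx - π/2)² = π² x(1-x)`, expanding each term `(-y²)ⁿ/(2n)!` of the Taylor
series of `cos y = sin (πx)`, `y = πx - π/2`, binomially in `-y² = π² x(1-x) - π²/4` and
regrouping the absolutely convergent double series by powers of `x(1-x)` gives
`sin (πx) = ∑ⱼ tⱼ π^{2j} (x(1-x))ʲ`. Here `t₀ = cos (π/2) = 0`, while for `j ≥ 1` the series `tⱼ`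
alternates with strictly decreasing terms, so `tⱼ ≥ a_{j,0} + a_{j,1} > 0`. Hence on `(0, 1)` the
partial sums `Q_m` increase strictly to `sin (πx)`. -/

open Finset
open scoped Nat

noncomputable def b (j k : ℕ) : ℝ :=
  (π ^ 2 / 4) ^ k * (j + k).choose j / (2 * j + 2 * k)!

lemma b_pos (j k : ℕ) : 0 < b j k := by
  have : 0 < ((j + k).choose j : ℝ) := by exact_mod_cast Nat.choose_pos (Nat.le_add_right j k)
  unfold b
  positivity

lemma a_eq_neg_one_pow_mul_b (j k : ℕ) : a j k = (-1) ^ k * b j k := by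
  rw [a, b, neg_div, neg_eq_neg_one_mul, mul_pow]
  ring

lemma b_le_pow_div_factorial (j k : ℕ) : b j k ≤ (π ^ 2 / 4) ^ k / k ! / j ! := by
  have hchoose : ((j + k).choose j : ℝ) * (j ! * k !) ≤ (2 * j + 2 * k)! := by
    have h := Nat.choose_mul_factorial_mul_factorial (Nat.le_add_right j k)
    rw [Nat.add_sub_cancel_left, mul_assoc] at h
    exact_mod_cast h.le.trans (Nat.factorial_le (by omega))
  rw [b, div_div, div_le_div_iff₀ (by positivity) (by positivity), mul_assoc]
  gcongr
  linarith

lemma summable_b (j : ℕ) : Summable (b j) :=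
  .of_nonneg_of_le (fun k ↦ (b_pos j k).le) (b_le_pow_div_factorial j)
    ((Real.summable_pow_div_factorial _).div_const _)

lemma summable_a (j : ℕ) : Summable (a j) :=
  (funext (a_eq_neg_one_pow_mul_b j) : a j = _) ▸ (summable_b j).alternating

lemma b_succ_mul (j k : ℕ) :
    b j (k + 1) * ((k + 1) * (2 * j + 2 * k + 1) * (2 * j + 2 * k + 2)) =
      b j k * (π ^ 2 / 4 * (j + k + 1)) := by
  have hchoose : ((j + k + 1).choose j : ℝ) * (k + 1) = (j + k).choose j * (j + k + 1) := by
    have := Nat.choose_mul_succ_eq (j + k) j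
    rw [show j + k + 1 - j = k + 1 by omega] at this
    exact_mod_cast this.symm
  have hfact : ((2 * j + 2 * (k + 1))! : ℝ) =
      (2 * j + 2 * k)! * ((2 * j + 2 * k + 1) * (2 * j + 2 * k + 2)) := by
    rw [show 2 * j + 2 * (k + 1) = 2 * j + 2 * k + 1 + 1 by ring, Nat.factorial_succ,
      Nat.factorial_succ]
    push_cast
    ring
  rw [b, b, hfact, ← add_assoc]
  field_simp
  linear_combination (π ^ 2 / 4) ^ k * π ^ 2 * hchoose

lemma b_succ_lt (j k : ℕ) (hj : 1 ≤ j) : b j (k + 1) < b j k := by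
  have hj' : (1 : ℝ) ≤ j := by exact_mod_cast hj
  have hk : (0 : ℝ) ≤ k := k.cast_nonneg
  have hpi : π ^ 2 / 4 < 3 := by nlinarith [Real.pi_lt_d2, Real.pi_pos]
  have hratio : π ^ 2 / 4 * (j + k + 1) < (k + 1) * (2 * j + 2 * k + 1) * (2 * j + 2 * k + 2) := by
    have : (3 : ℝ) ≤ (k + 1) * (2 * j + 2 * k + 1) := by nlinarith
    nlinarith
  refine lt_of_mul_lt_mul_right ?_ (by positivity :
    (0 : ℝ) ≤ (k + 1) * (2 * j + 2 * k + 1) * (2 * j + 2 * k + 2))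
  rw [b_succ_mul]
  exact mul_lt_mul_of_pos_left hratio (b_pos j k)

lemma t_pos {j : ℕ} (hj : 1 ≤ j) : 0 < t j := by
  have hanti : Antitone (b j) := antitone_nat_of_succ_le fun k ↦ (b_succ_lt j k hj).le
  have ht : t j = ∑' k, (-1) ^ k * b j k := by simp only [t, a_eq_neg_one_pow_mul_b]
  have hfirst_two := hanti.alternating_series_le_tendsto
    (ht ▸ (summable_b j).tendsto_alternating_series_tsum) 1
  simp only [mul_one, sum_range_succ, range_one, sum_singleton, pow_zero, one_mul, pow_one,
    neg_mul, add_neg_le_iff_le_add] at hfirst_two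
  linarith [b_succ_lt j 0 hj]

theorem HasSum.sum_antidiagonal {A α : Type*} [AddCommMonoid A] [HasAntidiagonal A]
    [AddCommMonoid α] [TopologicalSpace α] [ContinuousAdd α] [RegularSpace α]
    {f : A × A → α} {s : α} (h : HasSum f s) :
    HasSum (fun n ↦ ∑ p ∈ antidiagonal n, f p) s :=
  (HasAntidiagonal.sigmaAntidiagonalEquivProd.hasSum_iff.mpr h).sigma fun n ↦
    (antidiagonal n).hasSum f

lemma Real.hasSum_cos_neg_sq (y : ℝ) : HasSum (fun n ↦ (-y ^ 2) ^ n / (2 * n)!) (cos y) := by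
  convert Real.hasSum_cos y using 2 with n
  rw [neg_pow, pow_mul]

lemma sum_antidiagonal_a_mul_pow (z : ℝ) (n : ℕ) :
    ∑ p ∈ antidiagonal n, a p.1 p.2 * z ^ p.1 = (z - π ^ 2 / 4) ^ n / (2 * n)! := by
  rw [sub_eq_add_neg, (Commute.all _ _).add_pow', sum_div]
  refine sum_congr rfl fun p hp ↦ ?_
  rw [HasAntidiagonal.mem_antidiagonal] at hp
  rw [a, ← hp, ← mul_add, nsmul_eq_mul, neg_div]
  ring

lemma summable_a_mul_pow (z : ℝ) : Summable fun p : ℕ × ℕ ↦ a p.1 p.2 * z ^ p.1 := by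
  refine Summable.of_norm_bounded (g := fun p ↦ |z| ^ p.1 / p.1 ! * ((π ^ 2 / 4) ^ p.2 / p.2 !))
    ((Real.summable_pow_div_factorial _).mul_of_nonneg (Real.summable_pow_div_factorial _)
      (fun _ ↦ by positivity) fun _ ↦ by positivity) fun ⟨j, k⟩ ↦ ?_
  rw [Real.norm_eq_abs, abs_mul, a_eq_neg_one_pow_mul_b, abs_mul, abs_pow, abs_neg, abs_one,
    one_pow, one_mul, abs_of_pos (b_pos j k), abs_pow]
  calc b j k * |z| ^ j ≤ (π ^ 2 / 4) ^ k / k ! / j ! * |z| ^ j := by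
        gcongr; exact b_le_pow_div_factorial j k
    _ = _ := by ring

theorem hasSum_t_mul_pow (y : ℝ) : HasSum (fun j ↦ t j * (π ^ 2 / 4 - y ^ 2) ^ j) (cos y) := by
  set z := π ^ 2 / 4 - y ^ 2
  have hsum := (summable_a_mul_pow z).hasSum
  have hcos : ∑' p : ℕ × ℕ, a p.1 p.2 * z ^ p.1 = cos y := by
    refine hsum.sum_antidiagonal.unique ?_
    simpa only [sum_antidiagonal_a_mul_pow, z, sub_sub_cancel_left] using Real.hasSum_cos_neg_sq y
  rw [← hcos]
  exact hsum.prod_fiberwise fun j ↦ (summable_a j).hasSum.mul_right (z ^ j)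

lemma t_zero : t 0 = 0 := by
  have h := hasSum_t_mul_pow (π / 2)
  rw [show π ^ 2 / 4 - (π / 2) ^ 2 = 0 by ring, cos_pi_div_two] at h
  simpa using (hasSum_single 0 fun j hj ↦ by simp [hj]).unique h

lemma hasSum_sin_pi_mul (x : ℝ) :
    HasSum (fun j ↦ t j * π ^ (2 * j) * (x * (1 - x)) ^ j) (sin (π * x)) := by
  convert hasSum_t_mul_pow (π * x - π / 2) using 2 with j
  · rw [mul_assoc, pow_mul, ← mul_pow]
    ring
  · exact (cos_sub_pi_div_two _).symm

lemma t_mul_pow_pos {j : ℕ} (hj : 1 ≤ j) {x : ℝ} (hx0 : 0 < x) (hx1 : x < 1) :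
    0 < t j * π ^ (2 * j) * (x * (1 - x)) ^ j := by
  have := t_pos hj
  have : 0 < 1 - x := by linarith
  positivity

lemma Q_lt_Q_succ (m : ℕ) {x : ℝ} (hx0 : 0 < x) (hx1 : x < 1) : Q m x < Q (m + 1) x := by
  rw [Q, Q, sum_Icc_succ_top (by omega)]
  linarith [t_mul_pow_pos (Nat.le_add_left 1 m) hx0 hx1]

lemma Q_le_sin (m : ℕ) {x : ℝ} (hx0 : 0 < x) (hx1 : x < 1) : Q m x ≤ sin (π * x) := by
  refine sum_le_hasSum _ (fun j hj ↦ ?_) (hasSum_sin_pi_mul x)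
  rcases j with _ | j
  · simp [t_zero]
  · exact (t_mul_pow_pos (Nat.le_add_left 1 j) hx0 hx1).le

theorem Q_lt_Q_succ_lt_sin_general (m : ℕ) (x : ℝ) (hx1 : 0 < x) (hx2 : x < 1) :
    Q m x < Q (m + 1) x ∧ Q (m + 1) x < Real.sin (π * x) :=
  ⟨Q_lt_Q_succ m hx1 hx2, (Q_lt_Q_succ (m + 1) hx1 hx2).trans_le (Q_le_sin (m + 2) hx1 hx2)⟩

/-- For `m ≥ 1` and `0 < x < 1`, `Q_m(x) < Q_{m+1}(x) < sin(πx)`. -/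
theorem Q_lt_Q_succ_lt_sin (m : ℕ) (hm : 1 ≤ m) (x : ℝ) (hx1 : 0 < x) (hx2 : x < 1) :
    Q m x < Q (m + 1) x ∧ Q (m + 1) x < Real.sin (π * x) :=
  Q_lt_Q_succ_lt_sin_general m x hx1 hx2
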